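/- Let x ∈ (0,1) and m_n be an arbitrary sequence of positive integers. For each n, let s_{n,1}, …, s_{n,m_n} be i.i.d. random variables with density proportional to y^{⌊nx⌋-1}/(1+y)^{n+1} on (0,∞). Then (1/m_n) Σ_{ℓ=1}^{m_n} log(s_{n,ℓ}) converges in probability to log(x/(1-x)) as n → ∞. -/

import Mathlib

/-!
Write `k = ⌊n x⌋` and `r = x / (1 - x)`. Each `s n ℓ` follows the beta prime law
`betaPrime (k - 1) (n - k)`, whose moments of order `±2` are ratios of factorials (a beta
integral, computed by parts); they give `E[(s / r - r / s)²] → 0`. As `|log t| ≤ |t - t⁻¹|`,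
Cauchy–Schwarz then gives `E|log s - log r| → 0`, uniformly in `ℓ`. The triangle inequality and
Markov's inequality bound the probability of an `ε`-deviation of the average of the
`log s n ℓ` by `E|log s - log r| / ε`, whatever the number `m n` of terms.
-/

open MeasureTheory ProbabilityTheory Set Filter Topology
open scoped Nat

lemma pow_div_one_add_pow_le (p q : ℕ) {y : ℝ} (hy : 0 ≤ y) :
    y ^ p / (1 + y) ^ (p + q + 2) ≤ (1 + y) ^ (-(2 : ℝ)) := by
  have h1 : 1 ≤ 1 + y := by linarith
  calc y ^ p / (1 + y) ^ (p + q + 2) ≤ (1 + y) ^ p / (1 + y) ^ (p + (q + 2)) := by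
        rw [← add_assoc]; gcongr; linarith
    _ = ((1 + y) ^ (q + 2))⁻¹ := by rw [pow_add, div_mul_cancel_left₀ (by positivity)]
    _ ≤ ((1 + y) ^ 2)⁻¹ := inv_anti₀ (by positivity) (pow_le_pow_right₀ h1 (by omega))
    _ = (1 + y) ^ (-(2 : ℝ)) := by rw [Real.rpow_neg (by positivity), Real.rpow_two]

lemma integrableOn_pow_div_one_add_pow (p q : ℕ) :
    IntegrableOn (fun y : ℝ => y ^ p / (1 + y) ^ (p + q + 2)) (Ioi 0) := by
  have hdom : Integrable fun y : ℝ => (1 + ‖y‖) ^ (-(2 : ℝ)) :=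
    integrable_one_add_norm (by norm_num)
  refine hdom.integrableOn.mono' (by fun_prop : Measurable _).aestronglyMeasurable ?_
  filter_upwards [ae_restrict_mem measurableSet_Ioi] with y (hy : 0 < y)
  rw [Real.norm_of_nonneg (by positivity), Real.norm_of_nonneg hy.le]
  exact pow_div_one_add_pow_le p q hy.le

lemma hasDerivAt_pow_div_one_add_pow (a N : ℕ) {y : ℝ} (hy : 1 + y ≠ 0) :
    HasDerivAt (fun y : ℝ => y ^ a / (1 + y) ^ N)
      (a * y ^ (a - 1) / (1 + y) ^ N - N * y ^ a / (1 + y) ^ (N + 1)) y := by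
  have h : HasDerivAt (fun y : ℝ => y ^ a / (1 + y) ^ N) _ y :=
    (hasDerivAt_pow a y).div (((hasDerivAt_id y).const_add 1).pow N) (pow_ne_zero N hy)
  refine h.congr_deriv ?_
  rcases N with _ | N
  · simp
  · field_simp
    simp only [id, Nat.add_sub_cancel, pow_succ]
    ring

lemma tendsto_pow_div_one_add_pow_atTop {a N : ℕ} (h : a < N) :
    Tendsto (fun y : ℝ => y ^ a / (1 + y) ^ N) atTop (𝓝 0) := by
  have hlin : Tendsto (fun y : ℝ => 1 + y) atTop atTop :=
    tendsto_atTop_add_const_left _ 1 tendsto_id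
  have h1 : Tendsto (fun y : ℝ => ((1 + y) ^ (N - a))⁻¹) atTop (𝓝 0) :=
    tendsto_inv_atTop_zero.comp ((tendsto_pow_atTop (by omega)).comp hlin)
  refine squeeze_zero' ?_ ?_ h1
  · filter_upwards [eventually_ge_atTop 0] with y hy using by positivity
  · filter_upwards [eventually_ge_atTop 0] with y hy
    have h1y : 0 < 1 + y := by linarith
    calc y ^ a / (1 + y) ^ N ≤ (1 + y) ^ a / (1 + y) ^ (a + (N - a)) := by
          rw [Nat.add_sub_cancel' h.le]; gcongr; linarith
      _ = ((1 + y) ^ (N - a))⁻¹ := by rw [pow_add, div_mul_cancel_left₀ (by positivity)]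

lemma integral_pow_succ_div_one_add_pow (p q : ℕ) :
    (p + q + 2) * ∫ y in Ioi (0 : ℝ), y ^ (p + 1) / (1 + y) ^ (p + 1 + q + 2) =
      (p + 1) * ∫ y in Ioi (0 : ℝ), y ^ p / (1 + y) ^ (p + q + 2) := by
  have h₁ := (integrableOn_pow_div_one_add_pow p q).const_mul (p + 1 : ℝ)
  have h₂ := (integrableOn_pow_div_one_add_pow (p + 1) q).const_mul (p + q + 2 : ℝ)
  have hFTC := integral_Ioi_of_hasDerivAt_of_tendsto' (a := 0) (m := 0)
    (f' := fun y => (p + 1 : ℝ) * (y ^ p / (1 + y) ^ (p + q + 2)) -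
      (p + q + 2 : ℝ) * (y ^ (p + 1) / (1 + y) ^ (p + 1 + q + 2)))
    (fun y (hy : 0 ≤ y) => (hasDerivAt_pow_div_one_add_pow (p + 1) (p + q + 2)
      (by linarith)).congr_deriv (by
        rw [Nat.add_sub_cancel, show p + q + 2 + 1 = p + 1 + q + 2 by ring]; push_cast; ring))
    (h₁.sub h₂)
    (tendsto_pow_div_one_add_pow_atTop (by omega))
  rw [integral_sub h₁ h₂, integral_const_mul, integral_const_mul] at hFTC
  rw [zero_pow p.succ_ne_zero, zero_div, sub_zero] at hFTC
  linarith

theorem integral_pow_div_one_add_pow (p q : ℕ) :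
    ∫ y in Ioi (0 : ℝ), y ^ p / (1 + y) ^ (p + q + 2) = (p ! * q ! / (p + q + 1)! : ℝ) := by
  induction p with
  | zero =>
    have hFTC := integral_Ioi_of_hasDerivAt_of_nonneg' (a := 0) (l := 0)
      (g := fun y : ℝ => -(y ^ 0 / (1 + y) ^ (q + 1)) / (q + 1))
      (g' := fun y => y ^ 0 / (1 + y) ^ (0 + q + 2))
      (fun y (hy : 0 ≤ y) => ((hasDerivAt_pow_div_one_add_pow 0 (q + 1)
        (by linarith)).neg.div_const _).congr_deriv (by field_simp; push_cast; ring))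
      (fun y (hy : 0 < y) => by positivity)
      (by simpa using
        (tendsto_pow_div_one_add_pow_atTop (a := 0) (N := q + 1) (by omega)).neg.div_const _)
    rw [hFTC]
    simp only [pow_zero, add_zero, one_pow, div_self one_ne_zero, zero_sub, Nat.factorial_zero,
      Nat.cast_one, one_mul, zero_add, Nat.factorial_succ, Nat.cast_mul, Nat.cast_add]
    field_simp
  | succ p ih =>
    have h := integral_pow_succ_div_one_add_pow p q
    rw [ih] at h
    rw [show p + 1 + q + 1 = (p + q + 1) + 1 by ring, Nat.factorial_succ, Nat.factorial_succ]
    have hne : ((p + q + 1)! : ℝ) ≠ 0 := by positivity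
    push_cast
    field_simp at h ⊢
    linear_combination h

/-- The density of the beta prime distribution `β'(p + 1, q + 1)` on `(0, ∞)`. -/
noncomputable def betaPrimeDensity (p q : ℕ) (y : ℝ) : ℝ :=
  (p + q + 1)! / (p ! * q !) * (y ^ p / (1 + y) ^ (p + q + 2))

noncomputable def betaPrime (p q : ℕ) : Measure ℝ :=
  (volume.restrict (Ioi 0)).withDensity fun y => ENNReal.ofReal (betaPrimeDensity p q y)

section BetaPrime

variable (p q : ℕ)

lemma betaPrimeDensity_nonneg {y : ℝ} (hy : 0 ≤ y) : 0 ≤ betaPrimeDensity p q y := by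
  unfold betaPrimeDensity; positivity

lemma measurable_betaPrimeDensity : Measurable (betaPrimeDensity p q) := by
  unfold betaPrimeDensity; fun_prop

lemma integrableOn_betaPrimeDensity : IntegrableOn (betaPrimeDensity p q) (Ioi 0) :=
  (integrableOn_pow_div_one_add_pow p q).const_mul _

lemma setIntegral_betaPrimeDensity : ∫ y in Ioi 0, betaPrimeDensity p q y = 1 := by
  simp only [betaPrimeDensity]
  rw [integral_const_mul, integral_pow_div_one_add_pow]
  field_simp

instance isProbabilityMeasure_betaPrime : IsProbabilityMeasure (betaPrime p q) := by
  constructor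
  rw [betaPrime, withDensity_apply _ MeasurableSet.univ, Measure.restrict_univ,
    ← ofReal_integral_eq_lintegral_ofReal (integrableOn_betaPrimeDensity p q)
      ((ae_restrict_iff' measurableSet_Ioi).2 (.of_forall fun y hy =>
        betaPrimeDensity_nonneg p q hy.le)),
    setIntegral_betaPrimeDensity, ENNReal.ofReal_one]

lemma ae_pos_betaPrime : ∀ᵐ y ∂betaPrime p q, 0 < y :=
  withDensity_absolutelyContinuous _ _ (ae_restrict_mem measurableSet_Ioi)

lemma toReal_ofReal_betaPrimeDensity :
    ∀ᵐ y ∂volume.restrict (Ioi 0), (ENNReal.ofReal (betaPrimeDensity p q y)).toReal =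
      betaPrimeDensity p q y := by
  filter_upwards [ae_restrict_mem measurableSet_Ioi] with y (hy : 0 < y)
  exact ENNReal.toReal_ofReal (betaPrimeDensity_nonneg p q hy.le)

lemma integral_betaPrime (g : ℝ → ℝ) :
    ∫ y, g y ∂betaPrime p q = ∫ y in Ioi 0, betaPrimeDensity p q y * g y := by
  rw [betaPrime, integral_withDensity_eq_integral_toReal_smul
    (measurable_betaPrimeDensity p q).ennreal_ofReal (.of_forall fun _ => ENNReal.ofReal_lt_top)]
  refine integral_congr_ae ?_
  filter_upwards [toReal_ofReal_betaPrimeDensity p q] with y hy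
  rw [hy, smul_eq_mul]

lemma integrable_betaPrime_iff {g : ℝ → ℝ} :
    Integrable g (betaPrime p q) ↔
      IntegrableOn (fun y => betaPrimeDensity p q y * g y) (Ioi 0) := by
  rw [betaPrime, integrable_withDensity_iff_integrable_smul'
    (measurable_betaPrimeDensity p q).ennreal_ofReal (.of_forall fun _ => ENNReal.ofReal_lt_top)]
  refine integrable_congr ?_
  filter_upwards [toReal_ofReal_betaPrimeDensity p q] with y hy
  rw [hy, smul_eq_mul]

variable {p q} in
lemma integral_betaPrime_eq_of_mul_density {p' q' : ℕ} {g : ℝ → ℝ} {C : ℝ}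
    (h : ∀ y > 0, betaPrimeDensity p q y * g y = C * betaPrimeDensity p' q' y) :
    Integrable g (betaPrime p q) ∧ ∫ y, g y ∂betaPrime p q = C := by
  have hEq : EqOn (fun y => betaPrimeDensity p q y * g y) (fun y => C * betaPrimeDensity p' q' y)
      (Ioi 0) := fun y hy => h y hy
  rw [integrable_betaPrime_iff, integral_betaPrime, integrableOn_congr_fun hEq measurableSet_Ioi,
    setIntegral_congr_fun measurableSet_Ioi hEq, integral_const_mul,
    setIntegral_betaPrimeDensity, mul_one]
  exact ⟨(integrableOn_betaPrimeDensity p' q').const_mul C, rfl⟩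

lemma pow_mul_betaPrimeDensity (j : ℕ) (y : ℝ) :
    betaPrimeDensity p (q + j) y * y ^ j =
      ((p + j)! * q ! / (p ! * (q + j)!) : ℝ) * betaPrimeDensity (p + j) q y := by
  unfold betaPrimeDensity
  rw [show p + j + q = p + (q + j) by ring]
  field_simp
  ring

lemma inv_pow_mul_betaPrimeDensity (j : ℕ) {y : ℝ} (hy : y ≠ 0) :
    betaPrimeDensity (p + j) q y * (y ^ j)⁻¹ =
      (p ! * (q + j)! / ((p + j)! * q !) : ℝ) * betaPrimeDensity p (q + j) y := by
  rw [mul_inv_eq_iff_eq_mul₀ (pow_ne_zero j hy), mul_assoc, pow_mul_betaPrimeDensity, ← mul_assoc]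
  field_simp

end BetaPrime

lemma integral_sq_div_sub_div_betaPrime {p q : ℕ} (hp : 2 ≤ p) (hq : 2 ≤ q) {r : ℝ}
    (hr : r ≠ 0) :
    Integrable (fun y => (y / r - r / y) ^ 2) (betaPrime p q) ∧
      ∫ y, (y / r - r / y) ^ 2 ∂betaPrime p q =
        (p + 1) / (q - 1) * ((p + 2) / q) / r ^ 2 - 2 +
          r ^ 2 * ((q + 1) / (p - 1) * ((q + 2) / p)) := by
  obtain ⟨p, rfl⟩ := Nat.exists_eq_add_of_le' hp
  obtain ⟨q, rfl⟩ := Nat.exists_eq_add_of_le' hq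
  obtain ⟨hsq, hsq_eq⟩ := integral_betaPrime_eq_of_mul_density (g := fun y => y ^ 2)
    fun y _ => pow_mul_betaPrimeDensity (p + 2) q 2 y
  obtain ⟨hinv, hinv_eq⟩ := integral_betaPrime_eq_of_mul_density (g := fun y => (y ^ 2)⁻¹)
    fun y hy => inv_pow_mul_betaPrimeDensity p (q + 2) 2 hy.ne'
  have hexpand : (fun y => (y / r - r / y) ^ 2) =ᵐ[betaPrime (p + 2) (q + 2)]
      fun y => (r ^ 2)⁻¹ * y ^ 2 - 2 + r ^ 2 * (y ^ 2)⁻¹ := by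
    filter_upwards [ae_pos_betaPrime _ _] with y hy
    field_simp
    ring
  have hint : Integrable (fun y => (r ^ 2)⁻¹ * y ^ 2 - 2) (betaPrime (p + 2) (q + 2)) :=
    (hsq.const_mul _).sub (integrable_const _)
  refine ⟨(hint.add (hinv.const_mul (r ^ 2))).congr hexpand.symm, ?_⟩
  rw [integral_congr_ae hexpand, integral_add hint (hinv.const_mul _), integral_sub
    (hsq.const_mul _) (integrable_const _), integral_const_mul, integral_const_mul, hsq_eq,
    hinv_eq, integral_const]
  simp only [Nat.factorial_succ, probReal_univ, smul_eq_mul]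
  push_cast
  rw [show (p : ℝ) + 2 - 1 = p + 1 by ring, show (q : ℝ) + 2 - 1 = q + 1 by ring]
  field_simp
  ring

lemma tendsto_add_div_add {P Q : ℕ → ℝ} {x y : ℝ} (hP : Tendsto (fun n => P n / n) atTop (𝓝 x))
    (hQ : Tendsto (fun n => Q n / n) atTop (𝓝 y)) (hy : y ≠ 0) (a b : ℝ) :
    Tendsto (fun n => (P n + a) / (Q n + b)) atTop (𝓝 (x / y)) := by
  have h := (hP.add (tendsto_const_div_atTop_nhds_zero_nat a)).div
    (hQ.add (tendsto_const_div_atTop_nhds_zero_nat b)) (by simpa using hy)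
  rw [add_zero, add_zero] at h
  refine h.congr' ?_
  filter_upwards [eventually_ne_atTop 0] with n hn
  rw [Pi.div_apply, ← add_div, ← add_div, div_div_div_cancel_right₀ (Nat.cast_ne_zero.2 hn)]

lemma tendsto_atTop_of_tendsto_div_natCast {p : ℕ → ℕ} {x : ℝ}
    (hp : Tendsto (fun n => (p n : ℝ) / n) atTop (𝓝 x)) (hx : 0 < x) : Tendsto p atTop atTop := by
  rw [← tendsto_natCast_atTop_iff (R := ℝ)]
  refine (hp.pos_mul_atTop hx tendsto_natCast_atTop_atTop).congr' ?_
  filter_upwards [eventually_ne_atTop 0] with n hn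
  exact div_mul_cancel₀ _ (Nat.cast_ne_zero.2 hn)

lemma tendsto_integral_sq_div_sub_div_betaPrime {p q : ℕ → ℕ} {x y : ℝ}
    (hp : Tendsto (fun n => (p n : ℝ) / n) atTop (𝓝 x))
    (hq : Tendsto (fun n => (q n : ℝ) / n) atTop (𝓝 y)) (hx : 0 < x) (hy : 0 < y) :
    Tendsto (fun n => ∫ z, (z / (x / y) - x / y / z) ^ 2 ∂betaPrime (p n) (q n)) atTop (𝓝 0) := by
  set r := x / y
  have hr : r ≠ 0 := by positivity
  have hpq := fun a b => tendsto_add_div_add hp hq hy.ne' a b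
  have hqp := fun a b => tendsto_add_div_add hq hp hx.ne' a b
  have h := ((((hpq 1 (-1)).mul (hpq 2 0)).div_const (r ^ 2)).sub_const 2).add
    ((tendsto_const_nhds (x := r ^ 2)).mul ((hqp 1 (-1)).mul (hqp 2 0)))
  have hlim : x / y * (x / y) / r ^ 2 - 2 + r ^ 2 * (y / x * (y / x)) = 0 := by
    simp only [r]; field_simp; ring
  rw [hlim] at h
  refine h.congr' ?_
  filter_upwards [(tendsto_atTop_of_tendsto_div_natCast hp hx).eventually_ge_atTop 2,
    (tendsto_atTop_of_tendsto_div_natCast hq hy).eventually_ge_atTop 2] with n hpn hqn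
  rw [(integral_sq_div_sub_div_betaPrime hpn hqn hr).2]
  ring

lemma abs_log_le_abs_sub_inv {t : ℝ} (ht : 0 < t) : |Real.log t| ≤ |t - t⁻¹| := by
  rcases le_total 1 t with h | h
  · have hlog := Real.log_le_sub_one_of_pos ht
    have hinv : t⁻¹ ≤ 1 := inv_le_one_of_one_le₀ h
    rw [abs_of_nonneg (Real.log_nonneg h), abs_of_nonneg (by linarith)]
    linarith
  · have hlog := Real.log_le_sub_one_of_pos (inv_pos.2 ht)
    have hinv : 1 ≤ t⁻¹ := one_le_inv₀ ht |>.2 h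
    rw [Real.log_inv] at hlog
    rw [abs_of_nonpos (Real.log_nonpos ht.le h), abs_of_nonpos (by linarith)]
    linarith

lemma abs_log_sub_log_le {y r : ℝ} (hy : 0 < y) (hr : 0 < r) :
    |Real.log y - Real.log r| ≤ |y / r - r / y| := by
  simpa [Real.log_div hy.ne' hr.ne', inv_div] using abs_log_le_abs_sub_inv (div_pos hy hr)

lemma lintegral_ofReal_abs_le_sqrt_integral_sq {α : Type*} [MeasurableSpace α] {μ : Measure α}
    [IsProbabilityMeasure μ] {Z : α → ℝ} (hZ : AEStronglyMeasurable Z μ)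
    (hZ2 : Integrable (fun a => Z a ^ 2) μ) :
    ∫⁻ a, ENNReal.ofReal |Z a| ∂μ ≤ ENNReal.ofReal √(∫ a, Z a ^ 2 ∂μ) := by
  have hmem : MemLp (fun a => |Z a|) 2 μ :=
    (memLp_two_iff_integrable_sq hZ.norm).2 (by simpa only [Real.norm_eq_abs, sq_abs] using hZ2)
  rw [← ofReal_integral_eq_lintegral_ofReal (hmem.integrable one_le_two)
    (.of_forall fun _ => abs_nonneg _)]
  refine ENNReal.ofReal_le_ofReal ((le_abs_self _).trans (Real.abs_le_sqrt ?_))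
  have hvar := variance_nonneg (fun a => |Z a|) μ
  rw [variance_eq_sub hmem] at hvar
  simpa only [Pi.pow_apply, sq_abs, sub_nonneg] using hvar

lemma lintegral_abs_log_sub_log_le {μ : Measure ℝ} [IsProbabilityMeasure μ]
    (hpos : ∀ᵐ z ∂μ, 0 < z) {r : ℝ} (hr : 0 < r)
    (hint : Integrable (fun z => (z / r - r / z) ^ 2) μ) :
    ∫⁻ z, ENNReal.ofReal |Real.log z - Real.log r| ∂μ ≤
      ENNReal.ofReal √(∫ z, (z / r - r / z) ^ 2 ∂μ) :=
  (lintegral_mono_ae (hpos.mono fun _ hz =>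
    ENNReal.ofReal_le_ofReal (abs_log_sub_log_le hz hr))).trans
    (lintegral_ofReal_abs_le_sqrt_integral_sq
      (by fun_prop : Measurable _).aestronglyMeasurable hint)

theorem tendsto_lintegral_abs_log_sub_log_betaPrime {p q : ℕ → ℕ} {x y : ℝ}
    (hp : Tendsto (fun n => (p n : ℝ) / n) atTop (𝓝 x))
    (hq : Tendsto (fun n => (q n : ℝ) / n) atTop (𝓝 y)) (hx : 0 < x) (hy : 0 < y) :
    Tendsto (fun n => ∫⁻ z, ENNReal.ofReal |Real.log z - Real.log (x / y)| ∂betaPrime (p n) (q n))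
      atTop (𝓝 0) := by
  have hsqrt := ENNReal.tendsto_ofReal (tendsto_integral_sq_div_sub_div_betaPrime hp hq hx hy).sqrt
  rw [Real.sqrt_zero, ENNReal.ofReal_zero] at hsqrt
  refine tendsto_of_tendsto_of_tendsto_of_le_of_le' tendsto_const_nhds hsqrt
    (.of_forall fun _ => zero_le) ?_
  filter_upwards [(tendsto_atTop_of_tendsto_div_natCast hp hx).eventually_ge_atTop 2,
    (tendsto_atTop_of_tendsto_div_natCast hq hy).eventually_ge_atTop 2] with n hpn hqn
  exact lintegral_abs_log_sub_log_le (ae_pos_betaPrime _ _) (by positivity)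
    (integral_sq_div_sub_div_betaPrime hpn hqn (by positivity)).1

lemma tendsto_natFloor_mul_div_natCast {x : ℝ} (hx : 0 ≤ x) :
    Tendsto (fun n : ℕ => (⌊(n : ℝ) * x⌋₊ : ℝ) / n) atTop (𝓝 x) := by
  simpa only [Function.comp_def, mul_comm] using
    (tendsto_nat_floor_mul_div_atTop hx).comp tendsto_natCast_atTop_atTop

lemma tendsto_natFloor_mul_sub_one_div_natCast {x : ℝ} (hx : 0 < x) :
    Tendsto (fun n : ℕ => ((⌊(n : ℝ) * x⌋₊ - 1 : ℕ) : ℝ) / n) atTop (𝓝 x) := by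
  have hfloor := tendsto_natFloor_mul_div_natCast hx.le
  have h := hfloor.sub (tendsto_const_div_atTop_nhds_zero_nat 1)
  rw [sub_zero] at h
  refine h.congr' ?_
  filter_upwards [(tendsto_atTop_of_tendsto_div_natCast hfloor hx).eventually_ge_atTop 1] with n hn
  rw [Nat.cast_sub hn, Nat.cast_one, sub_div]

lemma natFloor_mul_le {x : ℝ} (hx : x ≤ 1) (n : ℕ) : ⌊(n : ℝ) * x⌋₊ ≤ n :=
  Nat.floor_le_of_le (mul_le_of_le_one_right n.cast_nonneg hx)

lemma tendsto_sub_natFloor_mul_div_natCast {x : ℝ} (hx₀ : 0 ≤ x) (hx₁ : x ≤ 1) :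
    Tendsto (fun n : ℕ => ((n - ⌊(n : ℝ) * x⌋₊ : ℕ) : ℝ) / n) atTop (𝓝 (1 - x)) := by
  refine (tendsto_const_nhds.sub (tendsto_natFloor_mul_div_natCast hx₀)).congr' ?_
  filter_upwards [eventually_ne_atTop 0] with n hn
  rw [Nat.cast_sub (natFloor_mul_le hx₁ n), sub_div, div_self (Nat.cast_ne_zero.2 hn)]

lemma natCast_mul_abs_average_sub_le {m : ℕ} (hm : m ≠ 0) (a : ℕ → ℝ) (c : ℝ) :
    m * |(1 / (m : ℝ)) * ∑ ℓ ∈ Finset.range m, a ℓ - c| ≤ ∑ ℓ ∈ Finset.range m, |a ℓ - c| := by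
  have hsum : (m : ℝ) * ((1 / (m : ℝ)) * ∑ ℓ ∈ Finset.range m, a ℓ - c) =
      ∑ ℓ ∈ Finset.range m, (a ℓ - c) := by
    rw [Finset.sum_sub_distrib, Finset.sum_const, Finset.card_range, nsmul_eq_mul]
    field_simp
  calc (m : ℝ) * |(1 / (m : ℝ)) * ∑ ℓ ∈ Finset.range m, a ℓ - c|
      = |∑ ℓ ∈ Finset.range m, (a ℓ - c)| := by
        rw [← hsum, abs_mul, Nat.abs_cast]
    _ ≤ ∑ ℓ ∈ Finset.range m, |a ℓ - c| := Finset.abs_sum_le_sum_abs _ _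

theorem meas_lt_abs_average_sub_le {Ω α : Type*} [MeasurableSpace Ω] [MeasurableSpace α]
    {P : Measure Ω} {μ : Measure α} [NeZero μ] {X : ℕ → Ω → α} {m : ℕ} (hm : m ≠ 0)
    (hX : ∀ ℓ < m, P.map (X ℓ) = μ) {g : α → ℝ} (hg : Measurable g) (c : ℝ) {ε : ℝ}
    (hε : 0 < ε) :
    P {ω | ε < |(1 / (m : ℝ)) * ∑ ℓ ∈ Finset.range m, g (X ℓ ω) - c|} ≤
      (∫⁻ y, ENNReal.ofReal |g y - c| ∂μ) / ENNReal.ofReal ε := by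
  have hXm : ∀ ℓ ∈ Finset.range m, AEMeasurable (X ℓ) P := fun ℓ hℓ =>
    .of_map_ne_zero (by rw [hX ℓ (Finset.mem_range.1 hℓ)]; exact NeZero.ne μ)
  have hf : Measurable fun y => ENNReal.ofReal |g y - c| := by fun_prop
  have hF : AEMeasurable (fun ω => ∑ ℓ ∈ Finset.range m, ENNReal.ofReal |g (X ℓ ω) - c|) P :=
    Finset.aemeasurable_fun_sum _ fun ℓ hℓ => hf.comp_aemeasurable (hXm ℓ hℓ)
  have hlint : ∫⁻ ω, ∑ ℓ ∈ Finset.range m, ENNReal.ofReal |g (X ℓ ω) - c| ∂P =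
      m * ∫⁻ y, ENNReal.ofReal |g y - c| ∂μ := by
    rw [lintegral_finsetSum' (f := fun ℓ ω => ENNReal.ofReal |g (X ℓ ω) - c|) _
        fun ℓ hℓ => hf.comp_aemeasurable (hXm ℓ hℓ),
      Finset.sum_congr rfl fun ℓ hℓ => (lintegral_map' hf.aemeasurable (hXm ℓ hℓ)).symm,
      Finset.sum_congr rfl fun ℓ hℓ => by rw [hX ℓ (Finset.mem_range.1 hℓ)],
      Finset.sum_const, Finset.card_range, nsmul_eq_mul]
  have hsub : {ω | ε < |(1 / (m : ℝ)) * ∑ ℓ ∈ Finset.range m, g (X ℓ ω) - c|} ⊆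
      {ω | ENNReal.ofReal (m * ε) ≤ ∑ ℓ ∈ Finset.range m, ENNReal.ofReal |g (X ℓ ω) - c|} :=
    fun ω hω => by
      rw [mem_ofPred_eq, ← ENNReal.ofReal_sum_of_nonneg fun _ _ => abs_nonneg _]
      exact ENNReal.ofReal_le_ofReal ((mul_lt_mul_of_pos_left hω
        (Nat.cast_pos.2 (Nat.pos_of_ne_zero hm))).le.trans (natCast_mul_abs_average_sub_le hm _ c))
  calc P {ω | ε < |(1 / (m : ℝ)) * ∑ ℓ ∈ Finset.range m, g (X ℓ ω) - c|}
      ≤ (∫⁻ ω, ∑ ℓ ∈ Finset.range m, ENNReal.ofReal |g (X ℓ ω) - c| ∂P) /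
          ENNReal.ofReal (m * ε) :=
        (measure_mono hsub).trans (meas_ge_le_lintegral_div hF
          (ENNReal.ofReal_pos.2 (by positivity)).ne' ENNReal.ofReal_ne_top)
    _ = (∫⁻ y, ENNReal.ofReal |g y - c| ∂μ) / ENNReal.ofReal ε := by
        rw [hlint, ENNReal.ofReal_mul m.cast_nonneg, ENNReal.ofReal_natCast,
          ENNReal.mul_div_mul_left _ _ (Nat.cast_ne_zero.2 hm) (ENNReal.natCast_ne_top m)]

lemma withDensity_eq_betaPrime {k n : ℕ} (hk : 1 ≤ k) (hkn : k ≤ n) :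
    (volume : Measure ℝ).withDensity (fun y => if 0 < y then ENNReal.ofReal
      ((n ! : ℝ) / (((k - 1)! : ℝ) * ((n - k)! : ℝ)) *
        (y ^ (k - 1) / (1 + y) ^ (n + 1))) else 0) = betaPrime (k - 1) (n - k) := by
  have hdens : (fun y : ℝ => if 0 < y then ENNReal.ofReal
      ((n ! : ℝ) / (((k - 1)! : ℝ) * ((n - k)! : ℝ)) *
        (y ^ (k - 1) / (1 + y) ^ (n + 1))) else 0) =
      (Ioi 0).indicator fun y => ENNReal.ofReal (betaPrimeDensity (k - 1) (n - k) y) := by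
    ext y
    simp only [indicator, mem_Ioi, betaPrimeDensity]
    rw [show k - 1 + (n - k) + 1 = n by omega, show k - 1 + (n - k) + 2 = n + 1 by omega]
  rw [hdens, withDensity_indicator measurableSet_Ioi, betaPrime]

theorem log_average_tendsto_logit_general
    {Ω : Type*} [MeasureSpace Ω] (P : Measure Ω)
    (x : ℝ) (hx : x ∈ Set.Ioo (0 : ℝ) 1) (m : ℕ → ℕ) (hm : ∀ n, 1 ≤ m n)
    (s : ℕ → ℕ → Ω → ℝ)
    (hlaw : ∀ n : ℕ, 1 ≤ ⌊(n : ℝ) * x⌋₊ → ∀ ℓ < m n,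
      Measure.map (s n ℓ) P = (volume : Measure ℝ).withDensity (fun y =>
        if 0 < y then ENNReal.ofReal
          ((n.factorial : ℝ) / (((⌊(n : ℝ) * x⌋₊ - 1).factorial : ℝ) *
              ((n - ⌊(n : ℝ) * x⌋₊).factorial : ℝ)) *
            (y ^ (⌊(n : ℝ) * x⌋₊ - 1) / (1 + y) ^ (n + 1))) else 0)) :
    ∀ ε : ℝ, 0 < ε →
      Filter.Tendsto
        (fun n : ℕ => P {ω |
          ε < |(1 / (m n : ℝ)) * ∑ ℓ ∈ Finset.range (m n), Real.log (s n ℓ ω) -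
            Real.log (x / (1 - x))|})
        Filter.atTop (nhds 0) := by
  obtain ⟨hx₀, hx₁⟩ := hx
  intro ε hε
  have hp := tendsto_natFloor_mul_sub_one_div_natCast hx₀
  have hL1 := tendsto_lintegral_abs_log_sub_log_betaPrime hp
    (tendsto_sub_natFloor_mul_div_natCast hx₀.le hx₁.le) hx₀ (sub_pos.2 hx₁)
  have hlawβ : ∀ᶠ n in atTop, ∀ ℓ < m n,
      P.map (s n ℓ) = betaPrime (⌊(n : ℝ) * x⌋₊ - 1) (n - ⌊(n : ℝ) * x⌋₊) := by
    filter_upwards [(tendsto_atTop_of_tendsto_div_natCast hp hx₀).eventually_ge_atTop 1]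
      with n hn ℓ hℓ
    rw [hlaw n (by omega) ℓ hℓ, withDensity_eq_betaPrime (by omega) (natFloor_mul_le hx₁.le n)]
  have hbound := ENNReal.Tendsto.div_const hL1 (.inr (ENNReal.ofReal_pos.2 hε).ne')
  rw [ENNReal.zero_div] at hbound
  refine tendsto_of_tendsto_of_tendsto_of_le_of_le' tendsto_const_nhds hbound
    (.of_forall fun _ => zero_le) ?_
  filter_upwards [hlawβ] with n hn
  exact meas_lt_abs_average_sub_le (Nat.one_le_iff_ne_zero.1 (hm n)) hn Real.measurable_log _ hε

theorem log_average_tendsto_logit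
    {Ω : Type*} [MeasureSpace Ω] (P : Measure Ω) [IsProbabilityMeasure P]
    (x : ℝ) (hx : x ∈ Set.Ioo (0 : ℝ) 1) (m : ℕ → ℕ) (hm : ∀ n, 1 ≤ m n)
    (s : ℕ → ℕ → Ω → ℝ)
    (hindep : ∀ n : ℕ, iIndepFun (s n) P)
    (hlaw : ∀ n : ℕ, 1 ≤ ⌊(n : ℝ) * x⌋₊ → ∀ ℓ < m n,
      Measure.map (s n ℓ) P = (volume : Measure ℝ).withDensity (fun y =>
        if 0 < y then ENNReal.ofReal
          ((n.factorial : ℝ) / (((⌊(n : ℝ) * x⌋₊ - 1).factorial : ℝ) *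
              ((n - ⌊(n : ℝ) * x⌋₊).factorial : ℝ)) *
            (y ^ (⌊(n : ℝ) * x⌋₊ - 1) / (1 + y) ^ (n + 1))) else 0)) :
    ∀ ε : ℝ, 0 < ε →
      Filter.Tendsto
        (fun n : ℕ => P {ω |
          ε < |(1 / (m n : ℝ)) * ∑ ℓ ∈ Finset.range (m n), Real.log (s n ℓ ω) -
            Real.log (x / (1 - x))|})
        Filter.atTop (nhds 0) :=
  log_average_tendsto_logit_general P x hx m hm s hlaw
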